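/- Let m ≥ 7 and n ≥ (m-3)(m-1)+2. Let G be a C_n-free graph with independence number at most m-1 that contains a cycle C of length n-1. Then the set of vertices of G outside V(C) contains no independent set of m-1 vertices. -/

import Mathlib

/-! Let `S` be an independent set of `m - 1` vertices off the cycle `u` of length `L = n - 1`.
Since `α(G) ≤ m - 1`, every vertex of the cycle has a neighbour in `S`, so by pigeonhole some
`s₀ ∈ S` has a set `N` of at least `m - 2` neighbours on it. Each of the following
configurations splices one or two outside vertices into the cycle and yields a `C_n`:
an outside vertex adjacent to two consecutive `u i`; an outside vertex adjacent to `u p` and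
`u q` with `u (p + 1) ~ u (q + 1)`; and distinct outside vertices `x ~ u p, u q` and
`y ~ u (q + 1), u (p + 2)`. The first two make `{s₀} ∪ u (N + 1)` independent, hence maximum,
and `|N| = m - 2`. As `2 |N| < L`, some `p ∈ N` has `p + 2 ∉ N`; the neighbour `s₁ ∈ S` of
`u (p + 2)` differs from `s₀`, so by maximality it sees some `u (q + 1)` with `q ∈ N`, which is
the third configuration. -/

open SimpleGraph

/-- `G` contains a cycle of length `n` (as a subgraph). -/
def HasCycleOfLength {V : Type*} (G : SimpleGraph V) (n : ℕ) : Prop :=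
  ∃ (v : V) (w : G.Walk v v), w.IsCycle ∧ w.length = n

theorem ZMod.exists_eq_add_succ_of_ne {L : ℕ} [NeZero L] {P Q : ZMod L} (h : P ≠ Q) :
    ∃ a : ℕ, a + 1 < L ∧ Q = P + (a + 1 : ℕ) := by
  have hval : (Q - P).val ≠ 0 := by
    rw [Ne, ZMod.val_eq_zero, sub_eq_zero]; exact h.symm
  refine ⟨(Q - P).val - 1, by have := ZMod.val_lt (Q - P); omega, ?_⟩
  rw [Nat.sub_add_cancel (Nat.one_le_iff_ne_zero.mpr hval), ZMod.natCast_zmod_val]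
  ring

theorem ZMod.exists_mem_add_two_notMem {L : ℕ} {N : Finset (ZMod L)} (hN : N.Nonempty)
    (h : 2 * N.card < L) : ∃ p ∈ N, p + 2 ∉ N := by
  by_contra! hclosed
  obtain ⟨p₀, hp₀⟩ := hN
  have hmem : ∀ t : ℕ, p₀ + (2 * t : ℕ) ∈ N := by
    intro t
    induction t with
    | zero => simpa using hp₀
    | succ t ih => simpa [mul_add, add_assoc] using hclosed _ ih
  have hinj : Set.InjOn (fun t : ℕ => p₀ + (2 * t : ℕ)) ↑(Finset.range (N.card + 1)) := by
    intro s hs t ht hst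
    simp only [Finset.coe_range, Set.mem_Iio] at hs ht
    have := (ZMod.natCast_eq_natCast_iff' _ _ L).mp (add_left_cancel hst)
    rw [Nat.mod_eq_of_lt (by omega), Nat.mod_eq_of_lt (by omega)] at this
    omega
  have := Finset.card_le_card (s := (Finset.range (N.card + 1)).image _) (t := N)
    (Finset.image_subset_iff.mpr fun t _ => hmem t)
  rw [Finset.card_image_of_injOn hinj, Finset.card_range] at this
  omega

section

variable {V : Type*} {G : SimpleGraph V}

theorem SimpleGraph.IsIndepSet.exists_adj_of_card_eq {k : ℕ}
    (hα : ∀ s : Finset V, G.IsIndepSet (s : Set V) → s.card ≤ k) {S : Finset V}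
    (hS : G.IsIndepSet (S : Set V)) (hcard : S.card = k) {v : V} (hv : v ∉ S) :
    ∃ s ∈ S, G.Adj v s := by
  classical
  by_contra! h
  have hins : G.IsIndepSet ↑(insert v S) := by
    rw [Finset.coe_insert]
    exact hS.insert fun s hs _ => ⟨h s hs, fun h' => h s hs h'.symm⟩
  have := hα _ hins
  rw [Finset.card_insert_of_notMem hv] at this
  omega

theorem hasCycleOfLength_of_isChain {x : V} {l : List V} (hl : 2 ≤ l.length)
    (hnd : (x :: l).Nodup) (hc : l.IsChain G.Adj) (hhead : ∀ y ∈ l.head?, G.Adj x y)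
    (hlast : ∀ y ∈ l.getLast?, G.Adj y x) :
    HasCycleOfLength G (l.length + 1) := by
  have hc' : (x :: l ++ [x]).IsChain G.Adj := by
    rw [List.cons_append]
    refine (hc.append (.singleton x) (by simpa using hlast)).cons fun y hy => hhead y ?_
    obtain ⟨a, l, rfl⟩ := List.exists_cons_of_length_pos (by omega : 0 < l.length)
    simpa using hy
  have hhead' : (x :: l ++ [x]).head (List.cons_ne_nil _ _) = x := by simp
  have hlast' : (x :: l ++ [x]).getLast (List.cons_ne_nil _ _) = x := by simp
  set w : G.Walk x x := (Walk.ofSupport _ _ hc').copy hhead' hlast' with hw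
  have hlen : w.length = l.length + 1 := by
    rw [hw, Walk.length_copy, Walk.length_ofSupport]; simp
  refine ⟨x, w, Walk.isCycle_iff_isPath_tail_and_le_length.mpr ⟨?_, by omega⟩, hlen⟩
  rw [Walk.isPath_def, Walk.support_tail_of_not_nil _ (by rw [← Walk.length_eq_zero_iff]; omega),
    hw, Walk.support_copy, Walk.support_ofSupport, List.cons_append, List.tail_cons,
    List.nodup_append]
  rw [List.nodup_cons] at hnd
  refine ⟨hnd.2, List.nodup_singleton x, ?_⟩
  rintro a ha b hb rfl
  exact hnd.1 (List.eq_of_mem_singleton hb ▸ ha)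

def cycleArc {L : ℕ} (u : ZMod L → V) (i : ZMod L) (d : ℕ) : List V :=
  (List.range d).map fun t : ℕ => u (i + t)

section cycleArc

variable {L : ℕ} {u : ZMod L → V}

theorem cycleArc_add (i : ZMod L) (d e : ℕ) :
    cycleArc u i (d + e) = cycleArc u i d ++ cycleArc u (i + d) e := by
  simp [cycleArc, List.range_add, add_assoc]

theorem cycleArc_succ (i : ZMod L) (d : ℕ) :
    cycleArc u i (d + 1) = u i :: cycleArc u (i + 1) d := by
  simp [cycleArc, List.range_succ_eq_map, add_assoc, add_comm (1 : ZMod L)]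

theorem length_cycleArc (i : ZMod L) (d : ℕ) : (cycleArc u i d).length = d := by
  simp [cycleArc]

theorem head?_cycleArc (i : ZMod L) (d : ℕ) : (cycleArc u i (d + 1)).head? = some (u i) := by
  simp [cycleArc_succ]

theorem getLast?_cycleArc (i : ZMod L) (d : ℕ) :
    (cycleArc u i (d + 1)).getLast? = some (u (i + d)) := by
  simp [cycleArc, List.getLast?_range]

theorem notMem_cycleArc {v : V} (hv : v ∉ Set.range u) (i : ZMod L) (d : ℕ) :
    v ∉ cycleArc u i d := by
  simp only [cycleArc, List.mem_map, not_exists, not_and]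
  exact fun t _ h => hv ⟨_, h⟩

theorem nodup_cycleArc (hu : Function.Injective u) (i : ZMod L) {d : ℕ} (hd : d ≤ L) :
    (cycleArc u i d).Nodup := by
  refine List.nodup_range.map_on fun s hs t ht hst => ?_
  rw [List.mem_range] at hs ht
  have := (ZMod.natCast_eq_natCast_iff' s t L).mp (add_left_cancel (hu hst))
  rwa [Nat.mod_eq_of_lt (by omega), Nat.mod_eq_of_lt (by omega)] at this

theorem nodup_cycleArc_append_cycleArc (hu : Function.Injective u) (i : ZMod L) {d e : ℕ}
    (h : d + 1 + e ≤ L) : (cycleArc u i d ++ cycleArc u (i + d + 1) e).Nodup := by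
  have hnd := nodup_cycleArc hu i h
  rw [add_assoc, cycleArc_add, add_comm 1, cycleArc_succ] at hnd
  exact hnd.sublist ((List.sublist_cons_self _ _).append_left _)

theorem isChain_cycleArc (hcyc : ∀ j, G.Adj (u j) (u (j + 1))) (i : ZMod L) (d : ℕ) :
    (cycleArc u i d).IsChain G.Adj := by
  rw [cycleArc, List.isChain_map, List.isChain_range]
  intro t _
  simpa [add_assoc] using hcyc (i + t)

theorem isChain_reverse_cycleArc (hcyc : ∀ j, G.Adj (u j) (u (j + 1))) (i : ZMod L) (d : ℕ) :
    (cycleArc u i d).reverse.IsChain G.Adj :=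
  List.isChain_reverse.mpr ((isChain_cycleArc hcyc i d).imp fun _ _ h => h.symm)

theorem card_insert_image_succ [DecidableEq V] (hu : Function.Injective u) {x : V}
    (hx : x ∉ Set.range u) (N : Finset (ZMod L)) :
    (insert x (N.image fun i => u (i + 1))).card = N.card + 1 := by
  rw [Finset.card_insert_of_notMem (by simpa using fun i _ h => hx ⟨_, h⟩),
    Finset.card_image_of_injective _ fun i j h => add_right_cancel (hu h)]

end cycleArc

section Lengthening

variable {L : ℕ} [NeZero L] {u : ZMod L → V}

theorem hasCycleOfLength_succ_of_adj_of_adj_succ (hu : Function.Injective u)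
    (hcyc : ∀ j, G.Adj (u j) (u (j + 1))) {x : V} (hx : x ∉ Set.range u) {i : ZMod L}
    (h₀ : G.Adj x (u i)) (h₁ : G.Adj x (u (i + 1))) : HasCycleOfLength G (L + 1) := by
  have hL : 2 ≤ L := by
    by_contra! hL
    obtain rfl : L = 1 := by have := NeZero.pos L; omega
    exact (hcyc i).ne (congrArg u (Subsingleton.elim _ _))
  obtain ⟨d, rfl⟩ : ∃ d, L = d + 1 := ⟨L - 1, by omega⟩
  have hd : ((1 + d : ℕ) : ZMod (d + 1)) = 0 := by rw [add_comm, ZMod.natCast_self]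
  push_cast at hd
  have := hasCycleOfLength_of_isChain (x := x) (l := cycleArc u (i + 1) (d + 1))
    (by rw [length_cycleArc]; omega)
    (List.nodup_cons.mpr ⟨notMem_cycleArc hx _ _, nodup_cycleArc hu _ le_rfl⟩)
    (isChain_cycleArc hcyc _ _) (by simpa [head?_cycleArc] using h₁) ?_
  · rwa [length_cycleArc] at this
  · simp only [getLast?_cycleArc, Option.mem_def, Option.some.injEq]
    rintro _ rfl
    convert h₀.symm using 2
    linear_combination hd

/-- The new cycle is `x, u Q, u (Q - 1), …, u (P + 1), u (Q + 1), u (Q + 2), …, u P`. -/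
theorem hasCycleOfLength_succ_of_adj_succ_succ (hu : Function.Injective u)
    (hcyc : ∀ j, G.Adj (u j) (u (j + 1))) {x : V} (hx : x ∉ Set.range u) {P Q : ZMod L}
    (hPQ : P ≠ Q) (hP : G.Adj x (u P)) (hQ : G.Adj x (u Q))
    (hchord : G.Adj (u (P + 1)) (u (Q + 1))) : HasCycleOfLength G (L + 1) := by
  obtain ⟨a, haL, rfl⟩ := ZMod.exists_eq_add_succ_of_ne hPQ
  obtain ⟨b, hb⟩ : ∃ b, a + 1 + (b + 1) = L := ⟨L - a - 2, by omega⟩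
  set A := cycleArc u (P + 1) (a + 1)
  set B := cycleArc u (P + 1 + (a + 1 : ℕ)) (b + 1)
  have hAB : (A ++ B).Nodup := by
    rw [← cycleArc_add]; exact nodup_cycleArc hu _ hb.le
  have hL : ((a + 1 + (b + 1) : ℕ) : ZMod L) = 0 := by rw [hb, ZMod.natCast_self]
  push_cast at hL hQ hchord
  have := hasCycleOfLength_of_isChain (x := x) (l := A.reverse ++ B)
    (by simp only [A, B, List.length_append, List.length_reverse, length_cycleArc]; omega)
    (List.nodup_cons.mpr ⟨?_, ((List.reverse_perm A).append_right B).nodup_iff.mpr hAB⟩)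
    ((isChain_reverse_cycleArc hcyc _ _).append (isChain_cycleArc hcyc _ _) ?_) ?_ ?_
  · rwa [List.length_append, List.length_reverse, length_cycleArc, length_cycleArc, hb] at this
  · simp only [List.mem_append, List.mem_reverse, not_or]
    exact ⟨notMem_cycleArc hx _ _, notMem_cycleArc hx _ _⟩
  · simp only [B, List.getLast?_reverse, head?_cycleArc, Option.mem_def, Option.some.injEq]
    rintro _ rfl _ rfl
    convert hchord using 2; push_cast; ring
  · simp only [A, List.head?_append, List.head?_reverse, getLast?_cycleArc, Option.some_or,
      Option.mem_def, Option.some.injEq, forall_eq']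
    convert hQ using 2; ring
  · simp only [B, List.getLast?_append, getLast?_cycleArc, List.getLast?_reverse,
      Option.some_or, Option.mem_def, Option.some.injEq, forall_eq']
    convert hP.symm using 2; push_cast; linear_combination hL

/-- The new cycle is `x, u Q, u (Q - 1), …, u (P + 1), y, u (Q + 2), u (Q + 3), …, u P`,
which skips `u (Q + 1)`. -/
theorem hasCycleOfLength_succ_of_adj_adj_of_adj_adj (hu : Function.Injective u)
    (hcyc : ∀ j, G.Adj (u j) (u (j + 1))) {x y : V} (hx : x ∉ Set.range u)
    (hy : y ∉ Set.range u) (hxy : x ≠ y) {P Q : ZMod L} (hPQ : P ≠ Q) (hPQ' : P ≠ Q + 1)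
    (hxP : G.Adj x (u P)) (hxQ : G.Adj x (u Q)) (hyP : G.Adj y (u (P + 1)))
    (hyQ : G.Adj y (u (Q + 2))) : HasCycleOfLength G (L + 1) := by
  obtain ⟨a, haL, rfl⟩ := ZMod.exists_eq_add_succ_of_ne hPQ
  obtain ⟨b, hb⟩ : ∃ b, a + 1 + 1 + (b + 1) = L := by
    refine ⟨L - a - 3, ?_⟩
    by_contra hL
    apply hPQ'
    have : ((a + 1 + 1 : ℕ) : ZMod L) = 0 := by
      rw [show a + 1 + 1 = L by omega, ZMod.natCast_self]
    push_cast at this ⊢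
    linear_combination -this
  set A := cycleArc u (P + 1) (a + 1)
  set B := cycleArc u (P + 1 + (a + 1 : ℕ) + 1) (b + 1)
  have hAB : (A ++ B).Nodup := nodup_cycleArc_append_cycleArc hu _ hb.le
  have hL : ((a + 1 + 1 + (b + 1) : ℕ) : ZMod L) = 0 := by rw [hb, ZMod.natCast_self]
  push_cast at hL hxQ hyQ
  have := hasCycleOfLength_of_isChain (x := x) (l := A.reverse ++ y :: B)
    (by simp only [A, B, List.length_append, List.length_reverse, List.length_cons,
      length_cycleArc]; omega)
    ?_ ((isChain_reverse_cycleArc hcyc _ _).append ((isChain_cycleArc hcyc _ _).cons ?_) ?_) ?_ ?_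
  · rwa [List.length_append, List.length_reverse, List.length_cons, length_cycleArc,
      length_cycleArc, show a + 1 + (b + 1 + 1) = L by omega] at this
  · have hl : (A.reverse ++ y :: B).Nodup := by
      refine List.perm_middle.nodup_iff.mpr (List.nodup_cons.mpr ⟨?_,
        ((List.reverse_perm A).append_right B).nodup_iff.mpr hAB⟩)
      simp only [List.mem_append, List.mem_reverse, not_or]
      exact ⟨notMem_cycleArc hy _ _, notMem_cycleArc hy _ _⟩
    refine List.nodup_cons.mpr ⟨?_, hl⟩
    simp only [List.mem_append, List.mem_reverse, List.mem_cons, not_or]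
    exact ⟨notMem_cycleArc hx _ _, hxy, notMem_cycleArc hx _ _⟩
  · simp only [head?_cycleArc, Option.mem_def, Option.some.injEq]
    rintro _ rfl
    convert hyQ using 2; push_cast; ring
  · simp only [List.getLast?_reverse, head?_cycleArc, Option.mem_def, Option.some.injEq]
    rintro _ rfl _ ⟨⟩
    exact hyP.symm
  · simp only [A, List.head?_append, List.head?_reverse, getLast?_cycleArc, List.head?_cons,
      Option.some_or, Option.mem_def, Option.some.injEq, forall_eq']
    convert hxQ using 2; ring
  · simp only [B, List.getLast?_append, List.getLast?_cons, getLast?_cycleArc,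
      Option.getD_some, Option.some_or, Option.mem_def, Option.some.injEq, forall_eq']
    convert hxP.symm using 2; push_cast; linear_combination hL

theorem hasCycleOfLength_succ_of_adj_of_adj_add_two (hu : Function.Injective u)
    (hcyc : ∀ j, G.Adj (u j) (u (j + 1))) {x y : V} (hx : x ∉ Set.range u)
    (hy : y ∉ Set.range u) (hxy : x ≠ y) {p q : ZMod L} (hxp : G.Adj x (u p))
    (hxq : G.Adj x (u q)) (hyq : G.Adj y (u (q + 1))) (hyp : G.Adj y (u (p + 2))) :
    HasCycleOfLength G (L + 1) := by
  by_cases hqp : q = p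
  · subst hqp
    exact hasCycleOfLength_succ_of_adj_of_adj_succ hu hcyc hy hyq
      (by rwa [add_assoc, one_add_one_eq_two])
  by_cases hqp' : q = p + 1
  · subst hqp'
    exact hasCycleOfLength_succ_of_adj_of_adj_succ hu hcyc hx hxp hxq
  exact hasCycleOfLength_succ_of_adj_adj_of_adj_adj hu hcyc hx hy hxy hqp hqp' hxq hxp hyq hyp

theorem isIndepSet_insert_image_succ [DecidableEq V] (hu : Function.Injective u)
    (hcyc : ∀ j, G.Adj (u j) (u (j + 1))) (hno : ¬ HasCycleOfLength G (L + 1)) {x : V}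
    (hx : x ∉ Set.range u) {N : Finset (ZMod L)} (hN : ∀ i ∈ N, G.Adj x (u i)) :
    G.IsIndepSet ↑(insert x (N.image fun i => u (i + 1))) := by
  rw [Finset.coe_insert, Finset.coe_image]
  refine Set.Pairwise.insert ?_ ?_
  · rintro _ ⟨p, hp, rfl⟩ _ ⟨q, hq, rfl⟩ hpq hadj
    exact hno (hasCycleOfLength_succ_of_adj_succ_succ hu hcyc hx (by rintro rfl; exact hpq rfl)
      (hN p hp) (hN q hq) hadj)
  · rintro _ ⟨p, hp, rfl⟩ -
    have hadj := hasCycleOfLength_succ_of_adj_of_adj_succ hu hcyc hx (hN p hp) (x := x)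
    exact ⟨fun h => hno (hadj h), fun h => hno (hadj h.symm)⟩

end Lengthening

theorem exists_lt_card_filter_adj {L : ℕ} [NeZero L] [DecidableRel G.Adj] {u : ZMod L → V}
    {S : Finset V} {c : ℕ} (hS : ∀ i, ∃ s ∈ S, G.Adj (u i) s) (hc : S.card * c < L) :
    ∃ s ∈ S, c < (Finset.univ.filter fun i => G.Adj s (u i)).card := by
  classical
  choose f hfS hf using hS
  obtain ⟨s, hs, hlt⟩ := Finset.exists_lt_card_fiber_of_mul_lt_card_of_maps_to
    (s := Finset.univ) (f := f) (fun i _ => hfS i) (by rwa [Finset.card_univ, ZMod.card])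
  refine ⟨s, hs, hlt.trans_le (Finset.card_le_card fun i hi => ?_)⟩
  simp only [Finset.mem_filter, Finset.mem_univ, true_and] at hi ⊢
  exact hi ▸ (hf i).symm

end

/-- Let `m ≥ 7` and `n ≥ (m-3)(m-1)+2`.  Let `G` be a `C_n`-free graph with
independence number at most `m-1` that contains a cycle `C` of length `n-1`
(encoded by an injective map `u : ZMod (n-1) → V` with consecutive vertices
adjacent).  Then the set of vertices of `G` outside `V(C)` contains no independent
set of `m-1` vertices. -/
theorem no_large_indepSet_outside_cycle (m n : ℕ) (hm : 7 ≤ m)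
    (hn : (m - 3) * (m - 1) + 2 ≤ n)
    {V : Type*} (G : SimpleGraph V)
    (hno : ¬ HasCycleOfLength G n)
    (hα : ∀ s : Finset V, (s : Set V).Pairwise (fun a b => ¬ G.Adj a b) → s.card ≤ m - 1)
    (u : ZMod (n - 1) → V) (hu : Function.Injective u)
    (hcyc : ∀ i : ZMod (n - 1), G.Adj (u i) (u (i + 1))) :
    ¬ ∃ s : Finset V, s.card = m - 1 ∧ (∀ v ∈ s, v ∉ Set.range u) ∧
      (s : Set V).Pairwise (fun a b => ¬ G.Adj a b) := by
  classical
  rintro ⟨S, hScard, hSout, hSind⟩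
  have hmn : 4 * (m - 1) ≤ (m - 3) * (m - 1) := Nat.mul_le_mul_right _ (by omega)
  have : NeZero (n - 1) := ⟨by omega⟩
  rw [show n = n - 1 + 1 by omega] at hno
  have hcover (i : ZMod (n - 1)) : ∃ s ∈ S, G.Adj (u i) s :=
    IsIndepSet.exists_adj_of_card_eq hα hSind hScard fun h => hSout _ h ⟨i, rfl⟩
  obtain ⟨s₀, hs₀S, hs₀N⟩ := exists_lt_card_filter_adj (c := m - 3) hcover
    (by rw [hScard, mul_comm]; omega)
  set N := Finset.univ.filter fun i => G.Adj s₀ (u i)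
  have hs₀ : s₀ ∉ Set.range u := hSout s₀ hs₀S
  have hNadj (i : ZMod (n - 1)) (hi : i ∈ N) : G.Adj s₀ (u i) := (Finset.mem_filter.mp hi).2
  have hW := isIndepSet_insert_image_succ hu hcyc hno hs₀ hNadj
  have hWcard := card_insert_image_succ hu hs₀ N
  have hN : N.card = m - 2 := by have := hα _ hW; omega
  obtain ⟨p, hpN, hp2⟩ := ZMod.exists_mem_add_two_notMem (N := N)
    (Finset.card_pos.mp (by omega)) (by omega)
  obtain ⟨s₁, hs₁S, hs₁⟩ := hcover (p + 2)
  have hs₁₀ : s₁ ≠ s₀ := by rintro rfl; exact hp2 (by simpa [N] using hs₁.symm)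
  obtain ⟨w, hw, hs₁w⟩ := IsIndepSet.exists_adj_of_card_eq hα hW (by omega) (by
    simp only [Finset.mem_insert, Finset.mem_image, not_or, not_exists, not_and]
    exact ⟨hs₁₀, fun i _ h => hSout s₁ hs₁S ⟨_, h⟩⟩)
  obtain rfl | ⟨q, hqN, rfl⟩ := by simpa using hw
  · exact hSind hs₁S hs₀S hs₁₀ hs₁w
  · exact hno (hasCycleOfLength_succ_of_adj_of_adj_add_two hu hcyc hs₀ (hSout s₁ hs₁S)
      hs₁₀.symm (hNadj p hpN) (hNadj q hqN) hs₁w hs₁.symm)
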